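/- (Corollary 5, fixed λ2 asymptotic.) Let W(t,v) = (h₃(v)t³+h₂(v)t²+h₁(v)t+h₀(v))·((1−v)⁷(1+v)⁴(1+v²)(1−t)³(1+t)(1−vt))^{-1} ∈ ℚ[[t,v]], with h₃(v) = v²(v⁴−v³+3v²−v+1), h₂(v) = v(2v⁴−4v³+v²−v−1), h₁(v) = v(−v⁴−v³+v²−4v+2), h₀(v) = v⁴−v³+3v²−v+1, and for λ1 ≥ λ2 ≥ 0 let m(λ1,λ2) be the coefficient of t^{λ1−λ2}v^{λ2} in W. Then for each fixed integer λ2 ≥ 0 there exists a constant C > 0 such that for all integers λ1 > 2λ2: |m(λ1,λ2) − λ1²·( λ2⁵/(5!·2⁴) + λ2⁴/(2⁵·3) + 5λ2³/2⁶ + 13λ2²/(4!·2) + 1633λ2/(5!·2⁵) + 15/2⁶ + (−1)^{λ2}·(λ2/2⁸ + 1/2⁶) )| ≤ C·(λ1+1). -/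

import Mathlib

open Finset

abbrev Q2 : Type := MvPowerSeries (Fin 2) ℚ

noncomputable def Xv (i : Fin 2) : Q2 := MvPowerSeries.X i

noncomputable def mon (i j : ℕ) : Fin 2 →₀ ℕ := Finsupp.single 0 i + Finsupp.single 1 j

noncomputable def c (i j : ℕ) (f : Q2) : ℚ := MvPowerSeries.coeff (mon i j) f

/-- Schur function S_{(l1,l2)}(x,y) for l1 ≥ l2. -/
noncomputable def schur (l1 l2 : ℕ) : Q2 :=
  (Xv 0 * Xv 1) ^ l2 * ∑ i ∈ range (l1 - l2 + 1), Xv 0 ^ i * Xv 1 ^ (l1 - l2 - i)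

/-- f = Σ_{l1 ≥ l2 ≥ 0} m(l1,l2) · S_{(l1,l2)}, expressed coefficientwise
(each coefficient receives only finitely many contributions, since `schur l1 l2`
is homogeneous of degree `l1 + l2`). -/
def IsSchurExpansion (m : ℕ → ℕ → ℚ) (f : Q2) : Prop :=
  ∀ i j : ℕ, c i j f =
    ∑ l1 ∈ range (i + j + 1), ∑ l2 ∈ range (l1 + 1), m l1 l2 * c i j (schur l1 l2)

/-- h(t,v) = Σ_{l1 ≥ l2 ≥ 0} m(l1,l2) t^{l1-l2} v^{l2}, the multiplicity series. -/
def IsMultSeries (m : ℕ → ℕ → ℚ) (h : Q2) : Prop :=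
  ∀ p q : ℕ, c p q h = m (p + q) q

/-- Substitution of φ0, φ1 (series with zero constant term) for the two variables of h:
the coefficient of a monomial e in h(φ0,φ1) only receives contributions from monomials
t^p v^q of h with p + q ≤ |e|. -/
noncomputable def subst2 (φ0 φ1 h : Q2) : Q2 :=
  fun e => ∑ p ∈ range (e 0 + e 1 + 1), ∑ q ∈ range (e 0 + e 1 + 1),
    MvPowerSeries.coeff (mon p q) h * MvPowerSeries.coeff e (φ0 ^ p * φ1 ^ q)

/-- Substitution of a series φ with zero constant term into a one-variable series a. -/
noncomputable def substP (φ : Q2) (a : PowerSeries ℚ) : Q2 :=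
  fun e => ∑ k ∈ range (e 0 + e 1 + 1),
    PowerSeries.coeff k a * MvPowerSeries.coeff e (φ ^ k)

/-- Hilbert series of the mixed trace algebra T₂ of two generic 3×3 matrices
(Berele–Stembridge), with x = Xv 0, y = Xv 1. -/
noncomputable def Hseries : Q2 :=
  ((1 - Xv 0) ^ 2 * (1 - Xv 1) ^ 2 * (1 - Xv 0 ^ 2) * (1 - Xv 1 ^ 2)
    * (1 - Xv 0 * Xv 1) ^ 2 * (1 - Xv 0 ^ 2 * Xv 1) * (1 - Xv 0 * Xv 1 ^ 2))⁻¹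

/-- W(t,v), the multiplicity series of Theorem 2, with t = Xv 0, v = Xv 1;
h₃(v) = v²(v⁴−v³+3v²−v+1), h₂(v) = v(2v⁴−4v³+v²−v−1),
h₁(v) = v(−v⁴−v³+v²−4v+2), h₀(v) = v⁴−v³+3v²−v+1. -/
noncomputable def Wseries : Q2 :=
  (Xv 1 ^ 2 * (Xv 1 ^ 4 - Xv 1 ^ 3 + 3 * Xv 1 ^ 2 - Xv 1 + 1) * Xv 0 ^ 3
    + Xv 1 * (2 * Xv 1 ^ 4 - 4 * Xv 1 ^ 3 + Xv 1 ^ 2 - Xv 1 - 1) * Xv 0 ^ 2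
    + Xv 1 * (-Xv 1 ^ 4 - Xv 1 ^ 3 + Xv 1 ^ 2 - 4 * Xv 1 + 2) * Xv 0
    + (Xv 1 ^ 4 - Xv 1 ^ 3 + 3 * Xv 1 ^ 2 - Xv 1 + 1))
  * ((1 - Xv 1) ^ 7 * (1 + Xv 1) ^ 4 * (1 + Xv 1 ^ 2)
      * (1 - Xv 0) ^ 3 * (1 + Xv 0) * (1 - Xv 1 * Xv 0))⁻¹

/-!
Write `W = ∑_{i ≤ 3} tⁱ uᵢ(v) · B(t,v)` with `uᵢ = hᵢ(v)/((1-v)⁷(1+v)⁴(1+v²))` and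
`B = 1/((1-t)³(1+t)(1-tv))`. The coefficient of `tᵖ v^q` in `B` is `b(p-q)`, where `b(n)` is the
quasi-polynomial coefficient of `tⁿ` in `1/((1-t)³(1+t))`, so `b(n) = n²/4 + O(n)`. Hence
`m(λ₁,λ₂) = ∑_{i ≤ 3, k ≤ λ₂} [v^k]uᵢ · b(λ₁ - 2λ₂ - i + k) = (λ₁²/4) ∑_{i,k} [v^k]uᵢ + O(λ₁)`.
Since `∑ᵢ hᵢ = (1-v)²(1+v)²(1+v²)`, that double sum is the coefficient of `v^λ₂` in
`1/((1-v)⁶(1+v)²)`, which is `4` times the stated quasi-polynomial in `λ₂`.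
-/

open PowerSeries

theorem PowerSeries.sum_range_coeff_eq_coeff_mul_inv_one_sub {k : Type*} [Field k]
    (f : k⟦X⟧) (n : ℕ) : ∑ i ∈ range (n + 1), coeff i f = coeff n (f * (1 - X)⁻¹) := by
  have hinv : (1 - X : k⟦X⟧)⁻¹ = mk 1 :=
    (PowerSeries.inv_eq_iff_mul_eq_one (by simp)).mpr (mk_one_mul_one_sub_eq_one k)
  rw [hinv, coeff_mul,
    Finset.Nat.sum_antidiagonal_eq_sum_range_succ (fun i j => coeff i f * coeff j (mk 1))]
  simp

noncomputable def tDenom : ℚ⟦X⟧ := (1 - X) ^ 3 * (1 + X)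

def tDenomInvCoeff (n : ℤ) : ℚ := ((n : ℚ) + 1) * ((n : ℚ) + 3) / 4 + (1 + (-1 : ℚ) ^ n) / 8

theorem tDenomInvCoeff_sub_recurrence (n : ℤ) :
    tDenomInvCoeff (n + 4) - 2 * tDenomInvCoeff (n + 3) + 2 * tDenomInvCoeff (n + 1)
      - tDenomInvCoeff n = 0 := by
  simp only [tDenomInvCoeff, zpow_add₀ (show (-1 : ℚ) ≠ 0 by norm_num)]
  norm_num
  ring

theorem tDenomInvCoeff_eq_zero {n : ℤ} (h1 : -3 ≤ n) (h2 : n ≤ -1) : tDenomInvCoeff n = 0 := by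
  interval_cases n <;> norm_num [tDenomInvCoeff]

theorem coeff_inv_tDenom (n : ℕ) : coeff n tDenom⁻¹ = tDenomInvCoeff n := by
  suffices h : tDenom⁻¹ = mk fun n => tDenomInvCoeff n by simp [h]
  rw [PowerSeries.inv_eq_iff_mul_eq_one (by simp [tDenom])]
  ext n
  have hexp : tDenom = 1 - C 2 * X ^ 1 + C 2 * X ^ 3 - X ^ 4 := by
    simp only [tDenom, map_ofNat]; ring
  rw [hexp]
  simp only [mul_sub, mul_add, mul_one, map_sub, map_add, ← mul_assoc, coeff_mul_X_pow',
    coeff_mul_C, coeff_mk, coeff_one]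
  rcases lt_or_ge n 4 with hn | hn
  · interval_cases n <;> norm_num [tDenomInvCoeff]
  · obtain ⟨m, rfl⟩ := Nat.exists_eq_add_of_le' hn
    simp only [Nat.cast_add, Nat.cast_ofNat, le_add_iff_nonneg_left, zero_le, ↓reduceIte,
      Nat.add_one_sub_one, Nat.reduceSubDiff, Nat.cast_one, add_tsub_cancel_right,
      Nat.add_eq_zero_iff, OfNat.ofNat_ne_zero, and_false]
    linear_combination tDenomInvCoeff_sub_recurrence m

def asymptoticCoeff (l2 : ℕ) : ℚ :=
  (l2 : ℚ) ^ 5 / ((Nat.factorial 5 : ℚ) * 2 ^ 4)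
    + (l2 : ℚ) ^ 4 / (2 ^ 5 * 3)
    + 5 * (l2 : ℚ) ^ 3 / 2 ^ 6
    + 13 * (l2 : ℚ) ^ 2 / ((Nat.factorial 4 : ℚ) * 2)
    + 1633 * (l2 : ℚ) / ((Nat.factorial 5 : ℚ) * 2 ^ 5)
    + 15 / 2 ^ 6
    + (-1 : ℚ) ^ l2 * ((l2 : ℚ) / 2 ^ 8 + 1 / 2 ^ 6)

theorem asymptoticCoeff_recurrence (n : ℕ) :
    asymptoticCoeff (n + 8) - 4 * asymptoticCoeff (n + 7) + 4 * asymptoticCoeff (n + 6)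
      + 4 * asymptoticCoeff (n + 5) - 10 * asymptoticCoeff (n + 4) + 4 * asymptoticCoeff (n + 3)
      + 4 * asymptoticCoeff (n + 2) - 4 * asymptoticCoeff (n + 1) + asymptoticCoeff n = 0 := by
  simp only [asymptoticCoeff, pow_add, Nat.factorial]
  push_cast
  ring

theorem coeff_inv_one_sub_pow_six_mul_one_add_sq (n : ℕ) :
    coeff n ((1 - X) ^ 6 * (1 + X) ^ 2 : ℚ⟦X⟧)⁻¹ = 4 * asymptoticCoeff n := by
  suffices h : ((1 - X) ^ 6 * (1 + X) ^ 2 : ℚ⟦X⟧)⁻¹ = mk fun n => 4 * asymptoticCoeff n by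
    simp [h]
  rw [PowerSeries.inv_eq_iff_mul_eq_one (by simp)]
  ext n
  have hexp : ((1 - X) ^ 6 * (1 + X) ^ 2 : ℚ⟦X⟧) = 1 - C 4 * X ^ 1 + C 4 * X ^ 2 + C 4 * X ^ 3
      - C 10 * X ^ 4 + C 4 * X ^ 5 + C 4 * X ^ 6 - C 4 * X ^ 7 + X ^ 8 := by
    simp only [map_ofNat]; ring
  rw [hexp]
  simp only [mul_sub, mul_add, mul_one, map_sub, map_add, ← mul_assoc, coeff_mul_X_pow',
    coeff_mul_C, coeff_mk, coeff_one]
  rcases lt_or_ge n 8 with hn | hn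
  · interval_cases n <;> norm_num [asymptoticCoeff, Nat.factorial]
  · obtain ⟨m, rfl⟩ := Nat.exists_eq_add_of_le' hn
    simp only [le_add_iff_nonneg_left, zero_le, ↓reduceIte, Nat.add_one_sub_one,
      Nat.reduceSubDiff, add_tsub_cancel_right, Nat.add_eq_zero_iff, OfNat.ofNat_ne_zero,
      and_false]
    linear_combination 4 * asymptoticCoeff_recurrence m

noncomputable def vDenom : ℚ⟦X⟧ := (1 - X) ^ 7 * (1 + X) ^ 4 * (1 + X ^ 2)

noncomputable def hNum : Fin 4 → ℚ⟦X⟧ :=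
  ![X ^ 4 - X ^ 3 + 3 * X ^ 2 - X + 1,
    X * (-X ^ 4 - X ^ 3 + X ^ 2 - 4 * X + 2),
    X * (2 * X ^ 4 - 4 * X ^ 3 + X ^ 2 - X - 1),
    X ^ 2 * (X ^ 4 - X ^ 3 + 3 * X ^ 2 - X + 1)]

noncomputable def uSeries (i : Fin 4) : ℚ⟦X⟧ := hNum i * vDenom⁻¹

theorem sum_uSeries : ∑ i, uSeries i = ((1 - X) ^ 5 * (1 + X) ^ 2 : ℚ⟦X⟧)⁻¹ := by
  set g : ℚ⟦X⟧ := (1 - X) ^ 2 * (1 + X) ^ 2 * (1 + X ^ 2)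
  have hsum : ∑ i, hNum i = g := by
    simp only [hNum, Fin.sum_univ_four, Fin.isValue, Matrix.cons_val_zero, Matrix.cons_val_one,
      Matrix.cons_val, g]
    ring
  have hden : vDenom = g * ((1 - X) ^ 5 * (1 + X) ^ 2) := by
    simp only [vDenom, g]; ring
  simp only [uSeries]
  rw [← sum_mul, hsum, hden, PowerSeries.mul_inv_rev, mul_comm, mul_assoc,
    PowerSeries.inv_mul_cancel _ (by simp [g]), mul_one]

theorem sum_sum_coeff_uSeries (q : ℕ) :
    ∑ i, ∑ k ∈ range (q + 1), coeff k (uSeries i) = 4 * asymptoticCoeff q := by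
  rw [← coeff_inv_one_sub_pow_six_mul_one_add_sq, sum_comm]
  simp_rw [← map_sum]
  rw [sum_range_coeff_eq_coeff_mul_inv_one_sub, sum_uSeries, ← PowerSeries.mul_inv_rev]
  congr 2
  ring

@[simp] theorem mon_apply_zero (i j : ℕ) : mon i j 0 = i := by simp [mon]

@[simp] theorem mon_apply_one (i j : ℕ) : mon i j 1 = j := by simp [mon]

theorem eq_mon_iff {e : Fin 2 →₀ ℕ} {i j : ℕ} : e = mon i j ↔ e 0 = i ∧ e 1 = j := by
  refine ⟨by rintro rfl; simp, fun ⟨h0, h1⟩ => ?_⟩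
  ext x
  fin_cases x <;> simpa

theorem mon_apply_self (e : Fin 2 →₀ ℕ) : mon (e 0) (e 1) = e :=
  (eq_mon_iff.mpr ⟨rfl, rfl⟩).symm

theorem c_mul (f g : Q2) (p q : ℕ) :
    c p q (f * g) = ∑ i ∈ range (p + 1), ∑ j ∈ range (q + 1), c i j f * c (p - i) (q - j) g := by
  rw [c, MvPowerSeries.coeff_mul, ← sum_product']
  have hmem : ∀ x : (Fin 2 →₀ ℕ) × (Fin 2 →₀ ℕ), x ∈ antidiagonal (mon p q) ↔
      x.1 0 + x.2 0 = p ∧ x.1 1 + x.2 1 = q := by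
    intro x
    rw [HasAntidiagonal.mem_antidiagonal, eq_mon_iff]
    simp
  refine sum_nbij' (fun x => (x.1 0, x.1 1)) (fun y => (mon y.1 y.2, mon (p - y.1) (q - y.2)))
    ?_ ?_ ?_ ?_ ?_
  · intro x hx
    simp only [hmem] at hx
    simp only [mem_product, mem_range]
    omega
  · intro y hy
    simp only [mem_product, mem_range] at hy
    simp only [hmem, mon_apply_zero, mon_apply_one]
    omega
  · intro x hx
    simp only [hmem] at hx
    exact Prod.ext (mon_apply_self _) (eq_mon_iff.mpr (by omega)).symm
  · intro y _
    simp
  · intro x hx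
    simp only [hmem] at hx
    rw [c, c, mon_apply_self,
      ← eq_mon_iff.mpr (by omega : x.2 0 = p - x.1 0 ∧ x.2 1 = q - x.1 1)]

theorem c_X_pow_mul_X_pow_mul (i j : ℕ) (f : Q2) (p q : ℕ) :
    c p q (Xv 0 ^ i * Xv 1 ^ j * f) = if i ≤ p ∧ j ≤ q then c (p - i) (q - j) f else 0 := by
  have hmono : Xv 0 ^ i * Xv 1 ^ j = MvPowerSeries.monomial (mon i j) 1 := by
    rw [Xv, Xv, MvPowerSeries.X_pow_eq, MvPowerSeries.X_pow_eq,
      MvPowerSeries.monomial_mul_monomial, mul_one, mon]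
  have hle : mon i j ≤ mon p q ↔ i ≤ p ∧ j ≤ q := by
    rw [Finsupp.le_def, Fin.forall_fin_two]
    simp
  rw [c, hmono, MvPowerSeries.coeff_monomial_mul, one_mul]
  by_cases h : i ≤ p ∧ j ≤ q
  · rw [if_pos (hle.mpr h), if_pos h, c]
    congr 2
    rw [eq_mon_iff]
    simp
  · rw [if_neg (hle.not.mpr h), if_neg h]

theorem c_X_zero_pow_mul (i : ℕ) (f : Q2) (p q : ℕ) :
    c p q (Xv 0 ^ i * f) = if i ≤ p then c (p - i) q f else 0 := by
  simpa using c_X_pow_mul_X_pow_mul i 0 f p q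

noncomputable def substVar (i : Fin 2) : ℚ⟦X⟧ →ₐ[ℚ] Q2 :=
  substAlgHom (HasSubst.X i)

@[simp] theorem substVar_X (i : Fin 2) : substVar i X = Xv i :=
  substAlgHom_X _

theorem substVar_inv (i : Fin 2) {a : ℚ⟦X⟧} (ha : constantCoeff a ≠ 0) :
    substVar i a⁻¹ = (substVar i a)⁻¹ := by
  have hmul : substVar i a⁻¹ * substVar i a = 1 := by
    rw [← map_mul, PowerSeries.inv_mul_cancel _ ha, map_one]
  have hc : MvPowerSeries.constantCoeff (substVar i a) ≠ 0 := fun h0 => by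
    simpa [h0] using congrArg MvPowerSeries.constantCoeff hmul
  exact ((MvPowerSeries.inv_eq_iff_mul_eq_one hc).mpr hmul).symm

theorem c_substVar_zero (a : ℚ⟦X⟧) (p q : ℕ) :
    c p q (substVar 0 a) = if q = 0 then coeff p a else 0 := by
  rw [c, substVar, coe_substAlgHom, coeff_subst_single,
    show (Finsupp.single 0 (mon p q 0) : Fin 2 →₀ ℕ) = mon p 0 by simp [mon]]
  simp [eq_mon_iff]

theorem c_substVar_one (a : ℚ⟦X⟧) (p q : ℕ) :
    c p q (substVar 1 a) = if p = 0 then coeff q a else 0 := by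
  rw [c, substVar, coe_substAlgHom, coeff_subst_single,
    show (Finsupp.single 1 (mon p q 1) : Fin 2 →₀ ℕ) = mon 0 q by simp [mon]]
  simp [eq_mon_iff]

theorem c_substVar_zero_mul (a : ℚ⟦X⟧) (f : Q2) (p q : ℕ) :
    c p q (substVar 0 a * f) = ∑ j ∈ range (p + 1), coeff j a * c (p - j) q f := by
  simp [c_mul, c_substVar_zero, ite_mul]

theorem c_substVar_one_mul (a : ℚ⟦X⟧) (f : Q2) (p q : ℕ) :
    c p q (substVar 1 a * f) = ∑ k ∈ range (q + 1), coeff k a * c p (q - k) f := by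
  simp [c_mul, c_substVar_one, ite_mul]

theorem c_one (p q : ℕ) : c p q 1 = if p = 0 ∧ q = 0 then 1 else 0 := by
  rw [c, MvPowerSeries.coeff_one, show (0 : Fin 2 →₀ ℕ) = mon 0 0 by simp [mon]]
  simp only [eq_mon_iff, mon_apply_zero, mon_apply_one]

theorem c_inv_one_sub_X_one_mul_X_zero (p q : ℕ) :
    c p q (1 - Xv 1 * Xv 0)⁻¹ = if p = q then 1 else 0 := by
  set E : Q2 := (1 - Xv 1 * Xv 0)⁻¹
  have hE : (1 - Xv 1 * Xv 0) * E = 1 :=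
    MvPowerSeries.mul_inv_cancel _ (by simp [Xv])
  have hrec : ∀ p q, c p q E = c p q 1 + if 1 ≤ p ∧ 1 ≤ q then c (p - 1) (q - 1) E else 0 := by
    intro p q
    have := congrArg (c p q) hE
    rw [sub_mul, one_mul, show Xv 1 * Xv 0 = Xv 0 ^ 1 * Xv 1 ^ 1 by ring, c, map_sub, ← c, ← c,
      c_X_pow_mul_X_pow_mul] at this
    rw [← this]; ring
  induction p generalizing q with
  | zero => rw [hrec]; simp [c_one, eq_comm]
  | succ p ih =>
    rw [hrec]
    rcases q with _ | q
    · simp [c_one]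
    · simp [c_one, ih]

theorem c_substVar_zero_mul_inv_one_sub (b : ℚ⟦X⟧) (p q : ℕ) :
    c p q (substVar 0 b * (1 - Xv 1 * Xv 0)⁻¹) = if q ≤ p then coeff (p - q) b else 0 := by
  simp only [c_substVar_zero_mul, c_inv_one_sub_X_one_mul_X_zero, mul_ite, mul_one, mul_zero]
  split_ifs with h
  · rw [sum_eq_single_of_mem (p - q) (by simp only [mem_range]; omega)
      (fun j hj hne => if_neg (by simp only [mem_range] at hj; omega)),
      if_pos (by omega)]
  · exact sum_eq_zero fun j hj => if_neg (by simp only [mem_range] at hj; omega)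

noncomputable def bSeries : Q2 := substVar 0 tDenom⁻¹ * (1 - Xv 1 * Xv 0)⁻¹

theorem c_bSeries {p q : ℕ} (h : q ≤ p + 3) : c p q bSeries = tDenomInvCoeff (p - q) := by
  rw [bSeries, c_substVar_zero_mul_inv_one_sub]
  split_ifs with hqp
  · rw [coeff_inv_tDenom]
    push_cast [hqp]
    rfl
  · rw [tDenomInvCoeff_eq_zero] <;> omega

theorem Wseries_eq_sum :
    Wseries = ∑ i : Fin 4, Xv 0 ^ (i : ℕ) * (substVar 1 (uSeries i) * bSeries) := by
  have hnum : Xv 1 ^ 2 * (Xv 1 ^ 4 - Xv 1 ^ 3 + 3 * Xv 1 ^ 2 - Xv 1 + 1) * Xv 0 ^ 3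
      + Xv 1 * (2 * Xv 1 ^ 4 - 4 * Xv 1 ^ 3 + Xv 1 ^ 2 - Xv 1 - 1) * Xv 0 ^ 2
      + Xv 1 * (-Xv 1 ^ 4 - Xv 1 ^ 3 + Xv 1 ^ 2 - 4 * Xv 1 + 2) * Xv 0
      + (Xv 1 ^ 4 - Xv 1 ^ 3 + 3 * Xv 1 ^ 2 - Xv 1 + 1)
      = ∑ i : Fin 4, Xv 0 ^ (i : ℕ) * substVar 1 (hNum i) := by
    simp only [Fin.sum_univ_four, hNum, Fin.isValue, Matrix.cons_val_zero, Matrix.cons_val_one,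
      Matrix.cons_val, map_add, map_sub, map_mul, map_neg, map_pow, map_one, map_ofNat, substVar_X,
      Fin.coe_ofNat_eq_mod, Nat.reduceMod]
    ring
  have hden : (1 - Xv 1) ^ 7 * (1 + Xv 1) ^ 4 * (1 + Xv 1 ^ 2)
      * (1 - Xv 0) ^ 3 * (1 + Xv 0) * (1 - Xv 1 * Xv 0)
      = substVar 1 vDenom * substVar 0 tDenom * (1 - Xv 1 * Xv 0) := by
    simp only [vDenom, tDenom, map_add, map_sub, map_mul, map_pow, map_one, substVar_X]
    ring
  rw [Wseries, hnum, hden, MvPowerSeries.mul_inv_rev, MvPowerSeries.mul_inv_rev,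
    ← substVar_inv 1 (a := vDenom) (by simp [vDenom]),
    ← substVar_inv 0 (a := tDenom) (by simp [tDenom]), sum_mul]
  refine sum_congr rfl fun i _ => ?_
  rw [uSeries, map_mul, bSeries]
  ring

theorem c_Wseries {p q : ℕ} (h : q ≤ p) :
    c p q Wseries = ∑ i : Fin 4, ∑ k ∈ range (q + 1),
      coeff k (uSeries i) * tDenomInvCoeff ((p : ℤ) - i - q + k) := by
  rw [Wseries_eq_sum, c, map_sum]
  refine sum_congr rfl fun i _ => ?_
  rw [← c, c_X_zero_pow_mul]
  have hi : (i : ℕ) ≤ 3 := by omega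
  split_ifs with hip
  · rw [c_substVar_one_mul]
    refine sum_congr rfl fun k hk => ?_
    rw [mem_range] at hk
    rw [c_bSeries (by omega)]
    congr 2
    push_cast [hip, (by omega : k ≤ q)]
    ring
  · -- the arguments of `tDenomInvCoeff` lie in `[-3, -1]`
    refine (sum_eq_zero fun k hk => ?_).symm
    rw [mem_range] at hk
    rw [tDenomInvCoeff_eq_zero (by omega) (by omega), mul_zero]

theorem abs_tDenomInvCoeff_sub_sq_le (n : ℤ) {x M : ℚ} (hx : 0 ≤ x) (hM : |(n : ℚ) - x| ≤ M) :
    |tDenomInvCoeff n - x ^ 2 / 4| ≤ (M + 2) ^ 2 * (x + 1) := by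
  have hsign : |(-1 : ℚ) ^ n| = 1 := by simp
  obtain ⟨hd₁, hd₂⟩ := abs_le.mp hM
  obtain ⟨hs₁, hs₂⟩ := abs_le.mp hsign.le
  have hform : tDenomInvCoeff n - x ^ 2 / 4
      = ((n : ℚ) - x + 2) * ((n : ℚ) - x + 2 + 2 * x) / 4 + ((-1 : ℚ) ^ n - 1) / 8 := by
    rw [tDenomInvCoeff]; ring
  rw [hform, abs_le]
  constructor <;> nlinarith [mul_nonneg hx (by linarith : (0 : ℚ) ≤ M)]

theorem abs_sum_mul_sub_le {ι 𝕜 : Type*} [Field 𝕜] [LinearOrder 𝕜] [IsStrictOrderedRing 𝕜]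
    (s : Finset ι) (w f : ι → 𝕜) {x K : 𝕜} (h : ∀ j ∈ s, |f j - x| ≤ K) :
    |∑ j ∈ s, w j * f j - (∑ j ∈ s, w j) * x| ≤ (∑ j ∈ s, |w j|) * K := by
  rw [sum_mul, sum_mul, ← sum_sub_distrib]
  calc |∑ j ∈ s, (w j * f j - w j * x)| ≤ ∑ j ∈ s, |w j * f j - w j * x| := abs_sum_le_sum_abs _ _
    _ ≤ ∑ j ∈ s, |w j| * K := sum_le_sum fun j hj => by
      rw [← mul_sub, abs_mul]
      exact mul_le_mul_of_nonneg_left (h j hj) (abs_nonneg _)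

theorem abs_c_Wseries_sub_le {p q : ℕ} (h : q ≤ p) :
    |c p q Wseries - ((p + q : ℕ) : ℚ) ^ 2 * asymptoticCoeff q|
      ≤ (∑ ik ∈ univ ×ˢ range (q + 1), |coeff ik.2 (uSeries ik.1)|)
          * ((2 * q + 5) ^ 2 * ((p + q : ℕ) + 1)) := by
  have hcoeff : asymptoticCoeff q
      = (∑ ik ∈ univ ×ˢ range (q + 1), coeff ik.2 (uSeries ik.1)) / 4 := by
    rw [sum_product, sum_sum_coeff_uSeries]; ring
  calc _ = |∑ ik ∈ univ ×ˢ range (q + 1),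
          coeff ik.2 (uSeries ik.1) * tDenomInvCoeff ((p : ℤ) - ik.1 - q + ik.2)
        - (∑ ik ∈ univ ×ˢ range (q + 1), coeff ik.2 (uSeries ik.1))
          * (((p + q : ℕ) : ℚ) ^ 2 / 4)| := by
        rw [c_Wseries h, hcoeff, ← sum_product']
        congr 1
        ring
    _ ≤ _ := abs_sum_mul_sub_le _ _ _ fun ik hik =>
        abs_tDenomInvCoeff_sub_sq_le _ (M := 2 * q + 3) (by positivity) (by
          simp only [mem_product, mem_univ, mem_range, true_and] at hik
          have hi : (ik.1 : ℚ) ≤ 3 := by exact_mod_cast (by omega : (ik.1 : ℕ) ≤ 3)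
          have hk : (ik.2 : ℚ) ≤ q := by exact_mod_cast (by omega : ik.2 ≤ q)
          have hi₀ : (0 : ℚ) ≤ ik.1 := by positivity
          push_cast
          rw [abs_le]
          constructor <;> linarith)
    _ = _ := by ring

/-- Corollary 5, fixed λ2 asymptotic: for fixed λ2 and λ1 > 2λ2,
m_{(λ1,λ2)}(T) = λ1²·( λ2⁵/(5!·2⁴) + λ2⁴/(2⁵·3) + 5λ2³/2⁶ + 13λ2²/(4!·2)
+ 1633λ2/(5!·2⁵) + 15/2⁶ + (−1)^{λ2}(λ2/2⁸ + 1/2⁶) ) + O(λ1),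
where m_{(λ1,λ2)}(T) is the coefficient of t^{λ1−λ2}v^{λ2} in W, and the constant
in the O-term may depend on λ2. -/
theorem asymptotics_fixed_l2 (l2 : ℕ) :
    ∃ C : ℚ, 0 < C ∧ ∀ l1 : ℕ, 2 * l2 < l1 →
      |c (l1 - l2) l2 Wseries
        - (l1 : ℚ) ^ 2
            * ((l2 : ℚ) ^ 5 / ((Nat.factorial 5 : ℚ) * 2 ^ 4)
                + (l2 : ℚ) ^ 4 / (2 ^ 5 * 3)
                + 5 * (l2 : ℚ) ^ 3 / 2 ^ 6
                + 13 * (l2 : ℚ) ^ 2 / ((Nat.factorial 4 : ℚ) * 2)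
                + 1633 * (l2 : ℚ) / ((Nat.factorial 5 : ℚ) * 2 ^ 5)
                + 15 / 2 ^ 6
                + (-1 : ℚ) ^ l2 * ((l2 : ℚ) / 2 ^ 8 + 1 / 2 ^ 6))|
      ≤ C * ((l1 : ℚ) + 1) := by
  refine ⟨(∑ ik ∈ univ ×ˢ range (l2 + 1), |coeff ik.2 (uSeries ik.1)|) * (2 * l2 + 5) ^ 2 + 1,
    by positivity, fun l1 hl => ?_⟩
  have hbound := abs_c_Wseries_sub_le (p := l1 - l2) (q := l2) (by omega)
  rw [Nat.sub_add_cancel (by omega : l2 ≤ l1)] at hbound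
  change |_ - (l1 : ℚ) ^ 2 * asymptoticCoeff l2| ≤ _
  have hS : 0 ≤ ∑ ik ∈ univ ×ˢ range (l2 + 1), |coeff ik.2 (uSeries ik.1)| :=
    sum_nonneg fun ik _ => abs_nonneg _
  nlinarith
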